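/- arXiv:2503.06882 — 3 statements merged into one kernel-verified Lean document; each statement's English description precedes it below -/
import Mathlib

section
/- Let D be a finite set of vectors in R^d, q ∈ R^d, and suppose p* ∈ D is the unique maximizer of ⟨p, q⟩ over D. Then there exists a scalar μ̄ such that for all μ > max(μ̄, 0), the point p* is the unique nearest neighbor of q' = μq in D under the Euclidean distance, i.e., ‖p* − μq‖ < ‖p − μq‖ for all p ∈ D with p ≠ p*. -/
open scoped RealInnerProductSpace

/-- If `pstar` is the unique MIPS solution for `q`, then for all sufficiently
large `μ > 0`, `pstar` is the unique nearest neighbor of `μ • q` in `D`. -/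
theorem unique_mips_is_nn_of_scaled_query {d : ℕ}
    (D : Finset (EuclideanSpace ℝ (Fin d)))
    (q pstar : EuclideanSpace ℝ (Fin d)) (hpstar : pstar ∈ D)
    (hmax : ∀ p ∈ D, p ≠ pstar → ⟪p, q⟫ < ⟪pstar, q⟫) :
    ∃ μbar : ℝ, ∀ μ : ℝ, max μbar 0 < μ →
      ∀ p ∈ D, p ≠ pstar → ‖pstar - μ • q‖ < ‖p - μ • q‖ := by
  set f : EuclideanSpace ℝ (Fin d) → ℝ :=
    fun p => (‖pstar‖ ^ 2 - ‖p‖ ^ 2) / (2 * (⟪pstar, q⟫ - ⟪p, q⟫)) with hf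
  refine ⟨D.sup' ⟨pstar, hpstar⟩ f, ?_⟩
  intro μ hμ p hp hne
  have hμpos : 0 < μ := lt_of_le_of_lt (le_max_right _ _) hμ
  have hδ : 0 < ⟪pstar, q⟫ - ⟪p, q⟫ := sub_pos.mpr (hmax p hp hne)
  have hfp : f p < μ :=
    lt_of_le_of_lt (Finset.le_sup' f hp) (lt_of_le_of_lt (le_max_left _ _) hμ)
  have hmul : ‖pstar‖ ^ 2 - ‖p‖ ^ 2 < μ * (2 * (⟪pstar, q⟫ - ⟪p, q⟫)) := by
    have := (div_lt_iff₀ (by positivity)).mp hfp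
    linarith
  have hsq : ‖pstar - μ • q‖ ^ 2 < ‖p - μ • q‖ ^ 2 := by
    have e1 : ‖pstar - μ • q‖ ^ 2 = ‖pstar‖ ^ 2 - 2 * ⟪pstar, μ • q⟫ + ‖μ • q‖ ^ 2 := by
      rw [@norm_sub_sq_real]
    have e2 : ‖p - μ • q‖ ^ 2 = ‖p‖ ^ 2 - 2 * ⟪p, μ • q⟫ + ‖μ • q‖ ^ 2 := by
      rw [@norm_sub_sq_real]
    have i1 : ⟪pstar, μ • q⟫ = μ * ⟪pstar, q⟫ := real_inner_smul_right _ _ _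
    have i2 : ⟪p, μ • q⟫ = μ * ⟪p, q⟫ := real_inner_smul_right _ _ _
    rw [e1, e2, i1, i2]; nlinarith
  exact lt_of_pow_lt_pow_left₀ 2 (norm_nonneg _) hsq
end

section
/- Let D be a finite set of vectors in R^d, q ∈ R^d, and let P* = {p* ∈ D : ⟨p*, q⟩ ≥ ⟨p, q⟩ for all p ∈ D} be the (possibly non-singleton) set of MIPS solutions. Then there exists μ̄ such that for all μ > max(μ̄, 0), some p* ∈ P* is a nearest neighbor of μq in D, i.e., ‖p* − μq‖ ≤ ‖p − μq‖ for all p ∈ D. -/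
open scoped RealInnerProductSpace

/-- For a (possibly non-singleton) set of MIPS solutions, there is a threshold
`μ̄` such that for every `μ > max(μ̄, 0)`, some MIPS solution is a nearest
neighbor of the scaled query `μ • q` in `D`. -/
theorem some_mips_solution_is_nn_of_scaled_query {d : ℕ}
    (D : Finset (EuclideanSpace ℝ (Fin d))) (hD : D.Nonempty)
    (q : EuclideanSpace ℝ (Fin d)) :
    ∃ μbar : ℝ, ∀ μ : ℝ, max μbar 0 < μ →
      ∃ pstar ∈ D, (∀ p ∈ D, ⟪p, q⟫ ≤ ⟪pstar, q⟫) ∧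
        (∀ p ∈ D, ‖pstar - μ • q‖ ≤ ‖p - μ • q‖) := by
  -- the set of MIPS maximizers
  obtain ⟨m, hmD, hm⟩ := D.exists_max_image (fun p => ⟪p, q⟫) hD
  set S := D.filter (fun p => ⟪m, q⟫ ≤ ⟪p, q⟫) with hS
  have hSne : S.Nonempty := ⟨m, by simp [hS, hmD]⟩
  obtain ⟨pstar, hpS, hps⟩ := S.exists_min_image (fun p => ‖p‖) hSne
  have hpD : pstar ∈ D := (Finset.mem_filter.mp hpS).1
  have hpmax : ∀ p ∈ D, ⟪p, q⟫ ≤ ⟪pstar, q⟫ := fun p hp =>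
    le_trans (hm p hp) (Finset.mem_filter.mp hpS).2
  refine ⟨D.sup' hD (fun p => (‖pstar‖ ^ 2 - ‖p‖ ^ 2) / (2 * (⟪pstar, q⟫ - ⟪p, q⟫))),
    fun μ hμ => ⟨pstar, hpD, hpmax, fun p hp => ?_⟩⟩
  have hμ0 : 0 < μ := lt_of_le_of_lt (le_max_right _ _) hμ
  have key : ‖pstar‖ ^ 2 - ‖p‖ ^ 2 ≤ 2 * μ * (⟪pstar, q⟫ - ⟪p, q⟫) := by
    rcases eq_or_lt_of_le (hpmax p hp) with h | h
    · -- tie: pstar has minimal norm among maximizers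
      have hpInS : p ∈ S := Finset.mem_filter.mpr ⟨hp, by rw [h]; exact (Finset.mem_filter.mp hpS).2⟩
      have := hps p hpInS
      nlinarith [norm_nonneg p, norm_nonneg pstar]
    · have hgap : 0 < ⟪pstar, q⟫ - ⟪p, q⟫ := sub_pos.mpr h
      have hle : (‖pstar‖ ^ 2 - ‖p‖ ^ 2) / (2 * (⟪pstar, q⟫ - ⟪p, q⟫)) < μ :=
        lt_of_le_of_lt (Finset.le_sup' (fun p => (‖pstar‖ ^ 2 - ‖p‖ ^ 2) / (2 * (⟪pstar, q⟫ - ⟪p, q⟫))) hp) (lt_of_le_of_lt (le_max_left _ _) hμ)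
      have h2 : 0 < 2 * (⟪pstar, q⟫ - ⟪p, q⟫) := by linarith
      have := (div_lt_iff₀ h2).mp hle
      nlinarith
  have hsq : ‖pstar - μ • q‖ ^ 2 ≤ ‖p - μ • q‖ ^ 2 := by
    rw [norm_sub_sq_real, norm_sub_sq_real, real_inner_smul_right, real_inner_smul_right]
    nlinarith
  nlinarith [norm_nonneg (pstar - μ • q), norm_nonneg (p - μ • q)]
end

section
/- Under the XBOX transformation (p' = (p, sqrt(M² − ‖p‖²)), q' = (q, 0) with M ≥ max_{p∈D} ‖p‖), a point p* ∈ D maximizes ⟨p, q⟩ over D if and only if p*' minimizes ‖p' − q'‖ over the transformed dataset. Hence MIPS in R^d reduces exactly to nearest neighbor search in R^{d+1}. -/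
open scoped RealInnerProductSpace

/-- Lift a vector of `ℝ^d` to `ℝ^{d+1}` (with the `L²` norm) by appending
a scalar coordinate. -/
noncomputable def xboxLift {d : ℕ} (x : EuclideanSpace ℝ (Fin d)) (t : ℝ) :
    WithLp 2 (EuclideanSpace ℝ (Fin d) × ℝ) :=
  (WithLp.equiv 2 (EuclideanSpace ℝ (Fin d) × ℝ)).symm (x, t)

lemma xbox_norm_sq {d : ℕ} (M : ℝ) (p q : EuclideanSpace ℝ (Fin d)) (hp : ‖p‖ ≤ M) :
    ‖xboxLift p (Real.sqrt (M ^ 2 - ‖p‖ ^ 2)) - xboxLift q 0‖ ^ 2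
      = M ^ 2 + ‖q‖ ^ 2 - 2 * ⟪p, q⟫ := by
  have hM0 : 0 ≤ M := le_trans (norm_nonneg p) hp
  have hnn : 0 ≤ M ^ 2 - ‖p‖ ^ 2 := by nlinarith [norm_nonneg p]
  rw [WithLp.prod_norm_sq_eq_of_L2]
  have h1 : (xboxLift p (Real.sqrt (M ^ 2 - ‖p‖ ^ 2)) - xboxLift q 0).fst = p - q := rfl
  have h2 : (xboxLift p (Real.sqrt (M ^ 2 - ‖p‖ ^ 2)) - xboxLift q 0).snd
      = Real.sqrt (M ^ 2 - ‖p‖ ^ 2) := by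
    show Real.sqrt (M ^ 2 - ‖p‖ ^ 2) - 0 = _; ring
  rw [h1, h2, Real.norm_eq_abs, sq_abs, Real.sq_sqrt hnn,
    @norm_sub_sq_real (EuclideanSpace ℝ (Fin d))]
  ring

/-- Under the XBOX transformation, `p* ∈ D` maximizes `⟪p, q⟫` over `D` iff
its lift minimizes the Euclidean distance to the lifted query: MIPS in `ℝ^d`
reduces exactly to NNS in `ℝ^{d+1}`. -/
theorem xbox_mips_iff_nns {d : ℕ} (D : Finset (EuclideanSpace ℝ (Fin d)))
    (M : ℝ) (hM : ∀ p ∈ D, ‖p‖ ≤ M)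
    (q : EuclideanSpace ℝ (Fin d)) (pstar : EuclideanSpace ℝ (Fin d))
    (hpstar : pstar ∈ D) :
    (∀ p ∈ D, ⟪p, q⟫ ≤ ⟪pstar, q⟫) ↔
      (∀ p ∈ D,
        ‖xboxLift pstar (Real.sqrt (M ^ 2 - ‖pstar‖ ^ 2)) - xboxLift q 0‖ ≤
          ‖xboxLift p (Real.sqrt (M ^ 2 - ‖p‖ ^ 2)) - xboxLift q 0‖) := by
  have key : ∀ p ∈ D, ∀ p' ∈ D,
      (⟪p, q⟫ ≤ ⟪p', q⟫ ↔
        ‖xboxLift p' (Real.sqrt (M ^ 2 - ‖p'‖ ^ 2)) - xboxLift q 0‖ ≤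
          ‖xboxLift p (Real.sqrt (M ^ 2 - ‖p‖ ^ 2)) - xboxLift q 0‖) := by
    intro p hp p' hp'
    rw [← pow_le_pow_iff_left₀ (norm_nonneg _) (norm_nonneg _) two_ne_zero,
      xbox_norm_sq M p q (hM p hp), xbox_norm_sq M p' q (hM p' hp')]
    constructor <;> intro h <;> nlinarith
  constructor
  · intro h p hp; exact (key p hp pstar hpstar).mp (h p hp)
  · intro h p hp; exact (key p hp pstar hpstar).mpr (h p hp)
end
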